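/- Main theorem, uniqueness part: Let (X,d) be a complete metric space and f_1,…,f_N : X → X nonexpansive maps satisfying condition (C): there exists a finite word (u_1,…,u_l) ∈ {1,…,N}^l such that the composition f_{u_l} ∘ … ∘ f_{u_1} is a Lipschitz contraction on X (Lipschitz constant L < 1). If (x_n)_{n≥0} and (y_n)_{n≥0} are any two bounded orbits driven by disjunctive sequences of symbols, then their omega-limit sets coincide: ω((x_n)) = ω((y_n)). -/
import Mathlib


/-- The omega-limit set of a sequence: the descending intersection of the
closures of the tails of the sequence. -/
def omegaLimitSet {X : Type*} [MetricSpace X] (x : ℕ → X) : Set X :=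
  ⋂ m : ℕ, closure (x '' Set.Ici m)

/-- Apply the maps of the IFS along a word, the head of the list acting first:
`wordMap f [u₁, …, u_l] = f_{u_l} ∘ … ∘ f_{u_1}`. -/
def wordMap {X : Type*} {N : ℕ} (f : Fin N → X → X) : List (Fin N) → X → X
  | [], p => p
  | i :: w, p => wordMap f w (f i p)

/-- A sequence of symbols is disjunctive if it contains every finite word over
the alphabet as a consecutive subword. -/
def Disjunctive {N : ℕ} (σ : ℕ → Fin N) : Prop :=
  ∀ (m : ℕ) (w : Fin m → Fin N), ∃ n₀ : ℕ, ∀ j : Fin m, σ (n₀ + (j : ℕ)) = w j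

section Aux
variable {X : Type*} [MetricSpace X] {N : ℕ}

lemma wordMap_append (f : Fin N → X → X) (w₁ w₂ : List (Fin N)) (p : X) :
    wordMap f (w₁ ++ w₂) p = wordMap f w₂ (wordMap f w₁ p) := by
  induction w₁ generalizing p with
  | nil => rfl
  | cons i w ih => simp [wordMap, ih]

lemma wordMap_nonexpansive (f : Fin N → X → X)
    (hf : ∀ (i : Fin N) (a b : X), dist (f i a) (f i b) ≤ dist a b)
    (w : List (Fin N)) (a b : X) :
    dist (wordMap f w a) (wordMap f w b) ≤ dist a b := by
  induction w generalizing a b with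
  | nil => simp [wordMap]
  | cons i w ih =>
    simp only [wordMap]
    exact (ih _ _).trans (hf i a b)

lemma orbit_wordMap (f : Fin N → X → X) (x : ℕ → X) (σ : ℕ → Fin N)
    (hx : ∀ n : ℕ, x (n + 1) = f (σ n) (x n)) (n₀ m : ℕ) :
    x (n₀ + m) = wordMap f ((List.range m).map (fun j => σ (n₀ + j))) (x n₀) := by
  induction m with
  | zero => rfl
  | succ m ih =>
    rw [List.range_succ, List.map_append, wordMap_append, ← ih]
    show x (n₀ + m + 1) = wordMap f [σ (n₀ + m)] (x (n₀ + m))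
    rw [hx]
    rfl

lemma orbit_match (f : Fin N → X → X) (x : ℕ → X) (σ : ℕ → Fin N)
    (hx : ∀ n : ℕ, x (n + 1) = f (σ n) (x n)) (w : List (Fin N)) (n₀ : ℕ)
    (hm : ∀ j (hj : j < w.length), σ (n₀ + j) = w.get ⟨j, hj⟩) :
    x (n₀ + w.length) = wordMap f w (x n₀) := by
  rw [orbit_wordMap f x σ hx n₀ w.length]
  congr 1
  apply List.ext_getElem
  · simp
  · intro j h1 h2
    simp only [List.getElem_map, List.getElem_range]
    exact hm j (by simpa using h2)

lemma wordMap_pow_contr (f : Fin N → X → X) (u : List (Fin N)) (L : ℝ) (hL0 : 0 ≤ L)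
    (hu : ∀ a b : X, dist (wordMap f u a) (wordMap f u b) ≤ L * dist a b) (k : ℕ)
    (a b : X) :
    dist (wordMap f ((List.replicate k u).flatten) a)
      (wordMap f ((List.replicate k u).flatten) b) ≤ L ^ k * dist a b := by
  induction k generalizing a b with
  | zero => simp [wordMap]
  | succ k ih =>
    rw [List.replicate_succ, List.flatten_cons, wordMap_append, wordMap_append]
    refine le_trans (ih _ _) ?_
    refine le_trans (mul_le_mul_of_nonneg_left (hu a b) (pow_nonneg hL0 k)) (le_of_eq ?_)
    ring

lemma disjunctive_occurs {σ : ℕ → Fin N} (hσ : Disjunctive σ) (w : List (Fin N))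
    (hw : w ≠ []) (m : ℕ) :
    ∃ n₀, m ≤ n₀ ∧ ∀ j (hj : j < w.length), σ (n₀ + j) = w.get ⟨j, hj⟩ := by
  have hlen : 0 < w.length := List.length_pos_iff.mpr hw
  obtain ⟨n₀, hn₀⟩ := hσ ((m + 1) * w.length)
    (fun i => w.get ⟨(i : ℕ) % w.length, Nat.mod_lt _ hlen⟩)
  refine ⟨n₀ + m * w.length, le_trans (Nat.le_mul_of_pos_right m hlen) (Nat.le_add_left _ _), ?_⟩
  intro j hj
  have h1 : m * w.length + j < (m + 1) * w.length := by
    rw [Nat.succ_mul]; omega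
  have h2 := hn₀ ⟨m * w.length + j, h1⟩
  simp only at h2
  rw [Nat.add_assoc]
  have hmod : (m * w.length + j) % w.length = j := by
    rw [Nat.add_comm, Nat.add_mul_mod_self_right]; exact Nat.mod_eq_of_lt hj
  rw [h2]
  congr 1
  exact Fin.ext hmod

end Aux

lemma omega_subset {X : Type*} [MetricSpace X] {N : ℕ}
    (f : Fin N → X → X)
    (hf : ∀ (i : Fin N) (a b : X), dist (f i a) (f i b) ≤ dist a b)
    (hcontr : ∃ (u : List (Fin N)) (L : ℝ), u ≠ [] ∧ 0 ≤ L ∧ L < 1 ∧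
      ∀ a b : X, dist (wordMap f u a) (wordMap f u b) ≤ L * dist a b)
    (x y : ℕ → X) (σ τ : ℕ → Fin N)
    (hx : ∀ n : ℕ, x (n + 1) = f (σ n) (x n))
    (hy : ∀ n : ℕ, y (n + 1) = f (τ n) (y n))
    (hxbdd : Bornology.IsBounded (Set.range x))
    (hybdd : Bornology.IsBounded (Set.range y))
    (hσ : Disjunctive σ) (hτ : Disjunctive τ) :
    omegaLimitSet x ⊆ omegaLimitSet y := by
  intro p hp
  simp only [omegaLimitSet, Set.mem_iInter] at hp ⊢
  intro m
  rw [Metric.mem_closure_iff]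
  intro ε hε
  obtain ⟨u, L, hune, hL0, hL1, hu⟩ := hcontr
  obtain ⟨D, hD⟩ := Metric.isBounded_iff.mp (hxbdd.union hybdd)
  have hxmem : ∀ n, x n ∈ Set.range x ∪ Set.range y := fun n => Or.inl ⟨n, rfl⟩
  have hymem : ∀ n, y n ∈ Set.range x ∪ Set.range y := fun n => Or.inr ⟨n, rfl⟩
  have hD0 : (0:ℝ) ≤ D := le_trans dist_nonneg (hD (hxmem 0) (hxmem 0))
  have hD1 : (0:ℝ) < D + 1 := by linarith
  obtain ⟨k0, hk0⟩ := exists_pow_lt_of_lt_one (by positivity : (0:ℝ) < ε/3/(D+1)) hL1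
  set k := k0 + 1 with hk
  have hLk : L ^ k < ε/3/(D+1) := lt_of_le_of_lt (by
      rw [pow_succ]; exact mul_le_of_le_one_right (pow_nonneg hL0 k0) hL1.le) hk0
  have hLkD : L ^ k * (D+1) < ε/3 := (lt_div_iff₀ hD1).mp hLk
  set wk : List (Fin N) := (List.replicate k u).flatten with hwk
  have hwkne : wk ≠ [] := by
    apply List.ne_nil_of_length_pos
    have hul : 0 < u.length := List.length_pos_iff.mpr hune
    have : wk.length = k * u.length := by simp [hwk]
    rw [this]
    exact Nat.mul_pos (Nat.succ_pos _) hul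
  obtain ⟨n₀, -, hmatch₀⟩ := disjunctive_occurs hσ wk hwkne 0
  have hx₀ : x (n₀ + wk.length) = wordMap f wk (x n₀) :=
    orbit_match f x σ hx wk n₀ hmatch₀
  have hp' := hp (n₀ + wk.length)
  rw [Metric.mem_closure_iff] at hp'
  obtain ⟨q, hq, hpq⟩ := hp' (ε/3) (by positivity)
  obtain ⟨n, hn, rfl⟩ := hq
  have hnge : n₀ + wk.length ≤ n := hn
  set w₂ : List (Fin N) :=
    (List.range (n - (n₀ + wk.length))).map (fun j => σ (n₀ + wk.length + j)) with hw₂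
  have hxn : x n = wordMap f w₂ (x (n₀ + wk.length)) := by
    have h := orbit_wordMap f x σ hx (n₀ + wk.length) (n - (n₀ + wk.length))
    rwa [Nat.add_sub_cancel' hnge] at h
  set W := wk ++ w₂ with hW
  have hWne : W ≠ [] := by
    rw [hW]
    simp only [ne_eq, List.append_eq_nil_iff]
    exact fun h => hwkne h.1
  obtain ⟨n₁, hn₁, hmatch₁⟩ := disjunctive_occurs hτ W hWne m
  have hyW : y (n₁ + W.length) = wordMap f W (y n₁) :=
    orbit_match f y τ hy W n₁ hmatch₁
  refine ⟨y (n₁ + W.length), ⟨n₁ + W.length, le_trans hn₁ (Nat.le_add_right _ _), rfl⟩, ?_⟩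
  have key : dist (x n) (y (n₁ + W.length)) < ε/3 := by
    rw [hyW, hW, wordMap_append, hxn, hx₀]
    have h1 : dist (wordMap f w₂ (wordMap f wk (x n₀))) (wordMap f w₂ (wordMap f wk (y n₁)))
        ≤ dist (wordMap f wk (x n₀)) (wordMap f wk (y n₁)) :=
      wordMap_nonexpansive f hf w₂ _ _
    have h2 : dist (wordMap f wk (x n₀)) (wordMap f wk (y n₁)) ≤ L ^ k * dist (x n₀) (y n₁) := by
      rw [hwk]
      exact wordMap_pow_contr f u L hL0 hu k _ _
    have h3 : dist (x n₀) (y n₁) ≤ D := hD (hxmem n₀) (hymem n₁)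
    have h4 : L ^ k * dist (x n₀) (y n₁) ≤ L ^ k * (D + 1) :=
      mul_le_mul_of_nonneg_left (by linarith) (pow_nonneg hL0 k)
    linarith
  calc dist p (y (n₁ + W.length)) ≤ dist p (x n) + dist (x n) (y (n₁ + W.length)) :=
        dist_triangle _ _ _
    _ < ε := by linarith


/-- Main theorem, uniqueness part: for a nonexpansive IFS on a
complete metric space satisfying condition (C) (some finite composition of the
maps is a Lipschitz contraction on `X`), any two bounded orbits driven by
disjunctive sequences of symbols have the same omega-limit set. -/
theorem stmt_10 {X : Type*} [MetricSpace X] [CompleteSpace X] {N : ℕ}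
    (f : Fin N → X → X)
    (hf : ∀ (i : Fin N) (a b : X), dist (f i a) (f i b) ≤ dist a b)
    (hcontr : ∃ (u : List (Fin N)) (L : ℝ), u ≠ [] ∧ 0 ≤ L ∧ L < 1 ∧
      ∀ a b : X, dist (wordMap f u a) (wordMap f u b) ≤ L * dist a b)
    (x y : ℕ → X) (σ τ : ℕ → Fin N)
    (hx : ∀ n : ℕ, x (n + 1) = f (σ n) (x n))
    (hy : ∀ n : ℕ, y (n + 1) = f (τ n) (y n))
    (hxbdd : Bornology.IsBounded (Set.range x))
    (hybdd : Bornology.IsBounded (Set.range y))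
    (hσ : Disjunctive σ) (hτ : Disjunctive τ) :
    omegaLimitSet x = omegaLimitSet y := by
  exact Set.Subset.antisymm
    (omega_subset f hf hcontr x y σ τ hx hy hxbdd hybdd hσ hτ)
    (omega_subset f hf hcontr y x τ σ hy hx hybdd hxbdd hτ hσ)
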